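/- arXiv:math/0607399 — 2 statements merged into one kernel-verified Lean document; each statement's English description precedes it below -/
import Mathlib

section
/- Let q be a prime power and suppose 0 ≤ i ≤ n. Then the number of elements g of GL(n,q) whose fixed space has dimension exactly i is at most q^{n²−i²}. -/
open CategoryTheory
open scoped BigOperators Classical

noncomputable section

/-- The tensor-product Markov chain transition matrix on `Irr(G)` defined by a
representation `η`: from `λ` move to `ρ` with probability
`d_ρ · m_ρ(λ ⊗ η) / (d_λ · d_η)`, where
`m_ρ(λ ⊗ η) = (1/|G|) Σ_g χ^ρ(g) χ^η(g) conj(χ^λ(g))`. Here `V : ι → FDRep ℂ G`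
enumerates the irreducible representations of `G`, and `d_λ = χ^λ(1)`. -/
def tensorChain {G : Type} [Group G] [Fintype G] {ι : Type} [Fintype ι]
    (V : ι → FDRep ℂ G) (η : FDRep ℂ G) : Matrix ι ι ℂ :=
  Matrix.of fun l r =>
    (V r).character 1 *
      ((1 / (Fintype.card G : ℂ)) *
        ∑ g : G, (V r).character g * η.character g * (starRingEnd ℂ) ((V l).character g)) /
      ((V l).character 1 * η.character 1)

/-- The Plancherel measure on `Irr(G)`: `π(λ) = d_λ² / |G|`. -/
def plancherel {G : Type} [Group G] [Fintype G] {ι : Type} [Fintype ι]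
    (V : ι → FDRep ℂ G) : ι → ℂ :=
  fun i => ((V i).character 1) ^ 2 / (Fintype.card G : ℂ)

/-- Total variation distance between two (complex-valued) measures on a finite set. -/
def tvDist {ι : Type} [Fintype ι] (P Q : ι → ℂ) : ℝ :=
  (1 / 2) * ∑ x : ι, ‖P x - Q x‖

/-- The eigenfunction `f_C(ρ) = |C|^{1/2} χ^ρ(C) / d_ρ` attached to a conjugacy class. -/
def eigFun {G : Type} [Group G] [Fintype G] {ι : Type} [Fintype ι]
    (V : ι → FDRep ℂ G) (C : ConjClasses G) : ι → ℂ :=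
  fun i => (Real.sqrt (Nat.card C.carrier) : ℂ) * (V i).character (Quotient.out C) /
    (V i).character 1

/-- The probability that the random walk on `G` generated by the uniform measure on the
set `C`, started at the identity, lies in the set `T` after `s` steps; i.e. the
probability that a product of `s` i.i.d. uniform elements of `C` lies in `T`. -/
def classWalkProb {G : Type} [Group G] [Fintype G] (s : ℕ) (C T : Set G) : ℝ :=
  (Nat.card {v : Fin s → G // (∀ k, v k ∈ C) ∧ (List.ofFn v).prod ∈ T}) /
    (Nat.card C : ℝ) ^ s

/-- The number of fixed points of a permutation. -/
def numFixedPoints {n : ℕ} (g : Equiv.Perm (Fin n)) : ℕ :=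
  (Finset.univ.filter fun x => g x = x).card

/-- The dimension of the fixed space of `g ∈ GL(n,q)`. -/
def fixDim {n : ℕ} {F : Type} [Field F] (g : GL (Fin n) F) : ℕ :=
  Module.finrank F (LinearMap.ker (Matrix.toLin' ((g : Matrix (Fin n) (Fin n) F) - 1)))

/-- The quantum Fourier sampling measure `P_H(ρ) = (d_ρ/|G|) Σ_{h ∈ H} χ^ρ(h)`. -/
def fourierSample {G : Type} [Group G] [Fintype G] {ι : Type} [Fintype ι]
    (V : ι → FDRep ℂ G) (H : Subgroup G) : ι → ℂ :=
  fun ρ => (V ρ).character 1 / (Fintype.card G : ℂ) * ∑ h : H, (V ρ).character (h : G)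

/-!
Put `C = range (g - 1)`, a subspace of dimension `r = n - i` that `g` maps onto itself, and fix
for every such `C` coordinates `V ≃ Kʳ × Kⁱ` in which `C = Kʳ × 0`. Then `g` is determined by its
restriction to `Kʳ × 0`, a map `Kʳ → V` whose range is `C` (so it also recovers `C` and the
coordinates), together with `g - 1` on `0 × Kⁱ`, which lands in `C`, i.e. a map `Kⁱ → Kʳ`. This
injects the elements with `i`-dimensional fixed space into a set of size
`q ^ (r n) * q ^ (i r) = q ^ (n² - i²)`.
-/

open Module LinearMap

section AdaptedCode

variable {K V : Type*} [Field K] [AddCommGroup V] [Module K V] {r s : ℕ}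

theorem exists_linearEquiv_fin_prod_range_inl [FiniteDimensional K V] {C : Submodule K V}
    (hC : finrank K C = r) (hV : finrank K V = r + s) :
    ∃ b : ((Fin r → K) × (Fin s → K)) ≃ₗ[K] V, range (b.toLinearMap ∘ₗ inl K _ _) = C := by
  obtain ⟨W, hCW⟩ := C.exists_isCompl
  have hW : finrank K W = s := by
    have := Submodule.finrank_add_eq_of_isCompl hCW
    omega
  let eC : (Fin r → K) ≃ₗ[K] C := LinearEquiv.ofFinrankEq _ _ (by simp [hC])
  let eW : (Fin s → K) ≃ₗ[K] W := LinearEquiv.ofFinrankEq _ _ (by simp [hW])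
  refine ⟨(eC.prodCongr eW).trans (Submodule.prodEquivOfIsCompl C W hCW), ?_⟩
  have : ((eC.prodCongr eW).trans (Submodule.prodEquivOfIsCompl C W hCW)).toLinearMap ∘ₗ
      inl K _ _ = C.subtype ∘ₗ eC.toLinearMap := by
    ext x
    simp
  rw [this, range_comp, LinearEquiv.range, Submodule.map_top, Submodule.range_subtype]

def adaptedCode (b : ((Fin r → K) × (Fin s → K)) ≃ₗ[K] V) (g : Module.End K V) :
    ((Fin r → K) →ₗ[K] V) × ((Fin s → K) →ₗ[K] (Fin r → K)) :=
  (g ∘ₗ b.toLinearMap ∘ₗ inl K _ _,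
    fst K _ _ ∘ₗ b.symm.toLinearMap ∘ₗ (g - 1) ∘ₗ b.toLinearMap ∘ₗ inr K _ _)

theorem map_eq_of_range_sub_one_le [FiniteDimensional K V] {C : Submodule K V}
    (g : GeneralLinearGroup K V) (h : range ((g : Module.End K V) - 1) ≤ C) :
    C.map (g : Module.End K V) = C := by
  refine Submodule.eq_of_le_of_finrank_eq ?_ (LinearEquiv.finrank_map_eq g.toLinearEquiv C)
  rintro _ ⟨v, hv, rfl⟩
  simpa using C.add_mem (h (mem_range_self _ v)) hv

theorem range_adaptedCode_fst [FiniteDimensional K V] {b : ((Fin r → K) × (Fin s → K)) ≃ₗ[K] V}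
    {C : Submodule K V} (hb : range (b.toLinearMap ∘ₗ inl K _ _) = C)
    (g : GeneralLinearGroup K V) (h : range ((g : Module.End K V) - 1) ≤ C) :
    range (adaptedCode b g).1 = C := by
  rw [adaptedCode, range_comp, hb, map_eq_of_range_sub_one_le g h]

theorem eq_of_adaptedCode_eq {b : ((Fin r → K) × (Fin s → K)) ≃ₗ[K] V}
    {C : Submodule K V} (hb : range (b.toLinearMap ∘ₗ inl K _ _) = C)
    {g₁ g₂ : Module.End K V} (h₁ : range (g₁ - 1) ≤ C) (h₂ : range (g₂ - 1) ≤ C)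
    (h : adaptedCode b g₁ = adaptedCode b g₂) : g₁ = g₂ := by
  have hC : ∀ v ∈ C, b ((b.symm v).1, 0) = v := by
    rw [← hb]
    rintro _ ⟨x, rfl⟩
    simp
  have hinl : g₁ ∘ₗ b.toLinearMap ∘ₗ inl K _ _ = g₂ ∘ₗ b.toLinearMap ∘ₗ inl K _ _ :=
    congrArg Prod.fst h
  have hinr : (g₁ - 1) ∘ₗ b.toLinearMap ∘ₗ inr K _ _ = (g₂ - 1) ∘ₗ b.toLinearMap ∘ₗ inr K _ _ := by
    refine LinearMap.ext fun y => ?_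
    have := LinearMap.congr_fun (congrArg Prod.snd h) y
    simp only [adaptedCode, coe_comp, Function.comp_apply, LinearEquiv.coe_coe, fst_apply] at this ⊢
    rw [← hC _ (h₁ (mem_range_self _ _)), ← hC _ (h₂ (mem_range_self _ _)), this]
  have hb' : g₁ ∘ₗ b.toLinearMap = g₂ ∘ₗ b.toLinearMap := by
    refine prod_ext (by simpa only [comp_assoc] using hinl) ?_
    simpa [sub_comp, comp_assoc] using congrArg (· + b.toLinearMap ∘ₗ inr K _ _) hinr
  ext v
  simpa using LinearMap.congr_fun hb' (b.symm v)

end AdaptedCode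

theorem card_generalLinearGroup_finrank_ker_sub_one_le {K V : Type*} [Field K] [Finite K]
    [AddCommGroup V] [Module K V] [FiniteDimensional K V] {s : ℕ} (hs : s ≤ finrank K V) :
    Nat.card {g : GeneralLinearGroup K V // finrank K (ker ((g : Module.End K V) - 1)) = s} ≤
      Nat.card K ^ (finrank K V ^ 2 - s ^ 2) := by
  obtain ⟨r, hV⟩ : ∃ r, finrank K V = r + s := ⟨_, (Nat.sub_add_cancel hs).symm⟩
  let C (g : {g : GeneralLinearGroup K V // finrank K (ker ((g : Module.End K V) - 1)) = s}) :
      {C : Submodule K V // finrank K C = r} :=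
    ⟨range ((g.1 : Module.End K V) - 1), by
      have := finrank_range_add_finrank_ker ((g.1 : Module.End K V) - 1)
      omega⟩
  choose b hb using fun C : {C : Submodule K V // finrank K C = r} =>
    exists_linearEquiv_fin_prod_range_inl C.2 hV
  have : Finite (((Fin r → K) →ₗ[K] V) × ((Fin s → K) →ₗ[K] (Fin r → K))) :=
    Module.finite_of_finite K
  have hcode : Function.Injective fun g => adaptedCode (b (C g)) g.1 := by
    intro g₁ g₂ (h : adaptedCode (b (C g₁)) g₁.1 = adaptedCode (b (C g₂)) g₂.1)
    have hC : C g₁ = C g₂ := Subtype.ext <| by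
      rw [← range_adaptedCode_fst (hb (C g₁)) g₁.1 le_rfl, h,
        range_adaptedCode_fst (hb (C g₂)) g₂.1 le_rfl]
    rw [← hC] at h
    exact Subtype.ext <| Units.ext <| eq_of_adaptedCode_eq (hb (C g₁)) le_rfl (hC ▸ le_rfl) h
  calc _ ≤ _ := Nat.card_le_card_of_injective _ hcode
    _ = Nat.card K ^ (finrank K V ^ 2 - s ^ 2) := by
      rw [Nat.card_prod, natCard_eq_pow_finrank (K := K) (V := (Fin r → K) →ₗ[K] V),
        natCard_eq_pow_finrank (K := K) (V := (Fin s → K) →ₗ[K] (Fin r → K)), ← pow_add]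
      simp only [finrank_linearMap, finrank_fin_fun, hV]
      congr 1
      rw [add_sq, Nat.add_sub_cancel]
      ring

theorem fixDim_eq_finrank_ker_toLin_sub_one {n : ℕ} {F : Type} [Field F] (g : GL (Fin n) F) :
    fixDim g =
      finrank F (ker ((Matrix.GeneralLinearGroup.toLin g : Module.End F (Fin n → F)) - 1)) := by
  rw [fixDim, Matrix.GeneralLinearGroup.coe_toLin, map_sub, Matrix.toLin'_one,
    Matrix.toLin'_apply', Module.End.one_eq_id]

theorem card_gl_with_fixed_space_dim_le_general {n i : ℕ} {F : Type} [Field F] [Fintype F]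
    (hi : i ≤ n) :
    Nat.card {g : GL (Fin n) F // fixDim g = i} ≤ (Fintype.card F) ^ (n ^ 2 - i ^ 2) := by
  calc Nat.card {g : GL (Fin n) F // fixDim g = i}
      = Nat.card {g : GeneralLinearGroup F (Fin n → F) //
          finrank F (ker ((g : Module.End F (Fin n → F)) - 1)) = i} :=
        Nat.card_congr (Matrix.GeneralLinearGroup.toLin.toEquiv.subtypeEquiv fun g => by
          rw [fixDim_eq_finrank_ker_toLin_sub_one]; rfl)
    _ ≤ Fintype.card F ^ (n ^ 2 - i ^ 2) := by
      simpa using card_generalLinearGroup_finrank_ker_sub_one_le (K := F) (V := Fin n → F)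
        (by simpa using hi)

/-- Lemma: for `0 ≤ i ≤ n`, the number of elements of `GL(n,q)` whose fixed space
has dimension exactly `i` is at most `q^(n² − i²)`. Here `F` is the field with `q`
elements. -/
theorem card_gl_with_fixed_space_dim_le {n i : ℕ} {F : Type} [Field F] [Fintype F]
    [DecidableEq F] (hi : i ≤ n) :
    Nat.card {g : GL (Fin n) F // fixDim g = i} ≤ (Fintype.card F) ^ (n ^ 2 - i ^ 2) :=
  card_gl_with_fixed_space_dim_le_general hi
end
end

section
/- Let G be a finite group and H a subgroup of G. For each subgroup H, define the probability measure P_H on Irr(G) by P_H(ρ) = (d_ρ/|G|)·Σ_{h∈H} χ^ρ(h). Let C_1,…,C_k denote the non-identity conjugacy classes of G. Then the total variation distance satisfies ||P_H − P_{{e}}||_TV ≤ (1/2)·[ Σ_{i=1}^k |C_i ∩ H|²·|C_i|^{−1} ]^{1/2}, where P_{{e}} is the measure corresponding to the trivial subgroup (i.e., the Plancherel measure ρ ↦ d_ρ²/|G|). -/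
open CategoryTheory
open scoped BigOperators Classical

noncomputable section

/-! The difference `P_H(ρ) − P_{e}(ρ)` is `(d_ρ/|G|) Σ_{h ∈ T} χ^ρ(h)` with `T = H ∖ {1}`.
Characters are class functions, so this sum is the inner product of `χ^ρ` with the class
function `g ↦ |[g] ∩ T| / |[g]|`, the projection of the indicator of `T` onto class
functions, whose squared norm is `Σ_C |C ∩ T|² / |C|`. Cauchy–Schwarz over `ρ` and Bessel's
inequality for the orthonormal family of irreducible characters, applied to this class function
and to the indicator of `1` (giving `Σ_ρ d_ρ² ≤ |G|`), bound the total variation distance. -/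

open CategoryTheory Finset

namespace Matrix

variable {n R : Type*} [Fintype n] [DecidableEq n] [CommRing R] [StarRing R]

theorem trace_eq_star_trace_of_mul_eq_one {A B M : Matrix n n R} [Invertible M]
    (hAB : A * B = 1) (hM : Aᴴ * M * A = M) : B.trace = star A.trace := by
  have hB : B = M⁻¹ * (Aᴴ * M) := by
    have : Aᴴ * M = M * B := by
      calc Aᴴ * M = Aᴴ * M * A * B := by rw [mul_assoc _ A, hAB, mul_one]
        _ = M * B := by rw [hM]
    rw [this, inv_mul_cancel_left_of_invertible]
  rw [hB, ← trace_mul_comm, mul_inv_cancel_right_of_invertible, trace_conjTranspose]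

end Matrix

theorem Subgroup.sum_eq_add_sum_diff_one {G M : Type*} [Group G] [Fintype G] [AddCommMonoid M]
    (H : Subgroup G) (f : G → M) :
    ∑ h : H, f h = f 1 + ∑ g with g ∈ (H : Set G) \ {1}, f g := by
  rw [← sum_subtype (univ.filter (· ∈ H)) (by simp) f,
    ← add_sum_erase _ _ (mem_filter.2 ⟨mem_univ _, H.one_mem⟩)]
  congr 2
  ext g
  simp [and_comm]

namespace ConjClasses

variable {G : Type*} [Group G]

theorem mk_out (C : ConjClasses G) : ConjClasses.mk (Quotient.out C) = C :=
  Quotient.out_eq C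

theorem carrier_mk_one : (ConjClasses.mk (1 : G)).carrier = {1} := by
  ext g
  rw [mem_carrier_iff_mk_eq, mk_eq_mk_iff_isConj, isConj_one_left, Set.mem_singleton_iff]

theorem carrier_inter_diff_one {C : ConjClasses G} (hC : C ≠ ConjClasses.mk 1) (T : Set G) :
    C.carrier ∩ (T \ {1}) = C.carrier ∩ T := by
  ext g
  refine ⟨fun ⟨hgC, hgT, _⟩ => ⟨hgC, hgT⟩, fun ⟨hgC, hgT⟩ => ⟨hgC, hgT, ?_⟩⟩
  rintro rfl
  exact hC (mem_carrier_iff_mk_eq.1 hgC).symm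

variable [Fintype (ConjClasses G)]

theorem sum_natCard_inter_diff_one_sq_div [DecidableEq (ConjClasses G)] (T : Set G) :
    ∑ C : ConjClasses G, (Nat.card ↥(C.carrier ∩ (T \ {1})) : ℝ) ^ 2 / Nat.card C.carrier =
      ∑ C with C ≠ ConjClasses.mk 1,
        (Nat.card ↥(C.carrier ∩ T) : ℝ) ^ 2 / Nat.card C.carrier := by
  rw [sum_filter]
  refine sum_congr rfl fun C _ => ?_
  split_ifs with hC
  · rw [carrier_inter_diff_one hC]
  · simp [not_not.1 hC, carrier_mk_one]

variable [Fintype G]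

theorem sum_filter_mem_eq_sum_natCard_smul {M : Type*} [AddCommMonoid M] (T : Set G)
    [DecidablePred (· ∈ T)] (F : G → M) (hF : ∀ g h, IsConj g h → F g = F h) :
    ∑ g with g ∈ T, F g =
      ∑ C : ConjClasses G, Nat.card ↥(C.carrier ∩ T) • F (Quotient.out C) := by
  rw [← sum_fiberwise _ ConjClasses.mk]
  refine sum_congr rfl fun C _ => ?_
  have hfiber : ∀ g, ConjClasses.mk g = C → F g = F (Quotient.out C) := fun g hg =>
    hF _ _ (mk_eq_mk_iff_isConj.1 (hg.trans (mk_out C).symm))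
  rw [sum_congr rfl fun g hg => hfiber g (mem_filter.1 hg).2, sum_const, Nat.card_coe_set_eq,
    Set.ncard_eq_toFinset_card']
  congr 2
  ext g
  simp [mem_carrier_iff_mk_eq, and_comm]

def density (T : Set G) (C : ConjClasses G) : ℝ :=
  Nat.card ↥(C.carrier ∩ T) / Nat.card C.carrier

theorem sum_density_smul {M : Type*} [AddCommMonoid M] [Module ℝ M] (T : Set G)
    [DecidablePred (· ∈ T)] (F : G → M) (hF : ∀ g h, IsConj g h → F g = F h) :
    ∑ g, density T (ConjClasses.mk g) • F g = ∑ g with g ∈ T, F g := by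
  have hclass : ∀ g h, IsConj g h →
      density T (ConjClasses.mk g) • F g = density T (ConjClasses.mk h) • F h :=
    fun g h hgh => by rw [mk_eq_mk_iff_isConj.2 hgh, hF g h hgh]
  have hsum := sum_filter_mem_eq_sum_natCard_smul Set.univ _ hclass
  simp only [Set.mem_univ, filter_true, Set.inter_univ] at hsum
  rw [hsum, sum_filter_mem_eq_sum_natCard_smul T F hF]
  refine sum_congr rfl fun C _ => ?_
  have hC : (Nat.card C.carrier : ℝ) ≠ 0 := by
    have : Nonempty C.carrier := ⟨⟨_, mem_carrier_iff_mk_eq.2 (mk_out C)⟩⟩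
    exact_mod_cast Nat.card_pos.ne'
  rw [mk_out, density, ← Nat.cast_smul_eq_nsmul ℝ, smul_smul, mul_div_cancel₀ _ hC,
    Nat.cast_smul_eq_nsmul]

theorem sum_density_sq (T : Set G) [DecidablePred (· ∈ T)] :
    ∑ g, density T (ConjClasses.mk g) ^ 2 =
      ∑ C : ConjClasses G, (Nat.card ↥(C.carrier ∩ T) : ℝ) ^ 2 / Nat.card C.carrier := by
  have hclass : ∀ g h, IsConj g h → density T (ConjClasses.mk g) = density T (ConjClasses.mk h) :=
    fun g h hgh => by rw [mk_eq_mk_iff_isConj.2 hgh]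
  simp_rw [sq, ← smul_eq_mul]
  rw [sum_density_smul T _ hclass, sum_filter_mem_eq_sum_natCard_smul T _ hclass]
  refine sum_congr rfl fun C _ => ?_
  rw [mk_out, density, nsmul_eq_mul]
  ring

end ConjClasses

namespace FDRep

open Matrix

variable {G : Type} [Group G]

theorem char_eq_of_isConj (V : FDRep ℂ G) {g h : G} (hgh : IsConj g h) :
    V.character g = V.character h := by
  obtain ⟨c, rfl⟩ := isConj_iff.1 hgh
  exact (char_conj V g c).symm

variable [Fintype G]

open scoped ComplexOrder in
theorem char_inv_eq_star (V : FDRep ℂ G) (g : G) :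
    V.character g⁻¹ = star (V.character g) := by
  let b := Module.finBasis ℂ V
  let B : G →* Matrix (Fin (Module.finrank ℂ V)) (Fin (Module.finrank ℂ V)) ℂ :=
    (LinearMap.toMatrixAlgEquiv b).toRingEquiv.toMonoidHom.comp V.ρ
  have hchar : ∀ x, V.character x = (B x).trace := fun x =>
    LinearMap.trace_eq_matrix_trace ℂ b _
  -- averaging `Bᴴ B` over `G` gives a positive definite form for which every `B g` is unitary
  let M := ∑ h : G, (B h)ᴴ * B h
  have hM : M.PosDef := by
    rw [show M = (B 1)ᴴ * B 1 + ∑ h ∈ univ.erase 1, (B h)ᴴ * B h from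
      (add_sum_erase _ _ (mem_univ 1)).symm, map_one, conjTranspose_one, one_mul]
    exact PosDef.one.add_posSemidef <| posSemidef_sum _ fun h _ =>
      posSemidef_conjTranspose_mul_self _
  have : Invertible M := hM.isUnit.invertible
  have hunitary : (B g)ᴴ * M * B g = M := by
    rw [mul_sum, sum_mul]
    refine Fintype.sum_equiv (Equiv.mulRight g) _ _ fun h => ?_
    simp only [Equiv.coe_mulRight, map_mul, conjTranspose_mul]
    noncomm_ring
  rw [hchar, hchar]
  exact trace_eq_star_trace_of_mul_eq_one (by rw [← map_mul, mul_inv_cancel, map_one]) hunitary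

theorem sum_star_char_mul_char (V W : FDRep ℂ G) [Simple V] [Simple W] :
    ∑ g, star (V.character g) * W.character g =
      if Nonempty (V ≅ W) then (Fintype.card G : ℂ) else 0 := by
  have hcard : (Nat.card G : ℂ) ≠ 0 := by exact_mod_cast Nat.card_pos.ne'
  let : Invertible (Nat.card G : ℂ) := invertibleOfNonzero hcard
  simp_rw [← char_inv_eq_star, mul_comm (V.character _)]
  rw [← Nat.card_eq_fintype_card, ← mul_inv_cancel_left₀ hcard (∑ g, _), char_orthonormal W V,
    Nonempty.congr Iso.symm Iso.symm]
  split_ifs <;> simp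

variable {ι : Type} (V : ι → FDRep ℂ G) (hirr : ∀ i, Simple (V i))
  (hdistinct : ∀ i j, Nonempty (V i ≅ V j) → i = j)
include hirr hdistinct

theorem orthonormal_char :
    Orthonormal ℂ fun i => ((√(Fintype.card G) : ℝ) : ℂ)⁻¹ • WithLp.toLp 2 (V i).character := by
  rw [orthonormal_iff_ite]
  intro i j
  have := hirr i
  have := hirr j
  have hsq : ((√(Fintype.card G) : ℝ) : ℂ) * ((√(Fintype.card G) : ℝ) : ℂ) = Fintype.card G := by
    rw [← Complex.ofReal_mul, Real.mul_self_sqrt (Nat.cast_nonneg _), Complex.ofReal_natCast]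
  rw [inner_smul_left, inner_smul_right, EuclideanSpace.inner_toLp_toLp, dotProduct_comm]
  simp only [dotProduct, Pi.star_apply, sum_star_char_mul_char, map_inv₀, Complex.conj_ofReal]
  rw [← mul_assoc, ← mul_inv, hsq]
  by_cases hij : i = j
  · subst hij
    simp [Fintype.card_ne_zero]
  · have : ¬Nonempty (V i ≅ V j) := fun h => hij (hdistinct i j h)
    simp [hij, this]

theorem sum_norm_sum_star_char_mul_sq_le [Fintype ι] (v : G → ℂ) :
    ∑ i, ‖∑ g, star ((V i).character g) * v g‖ ^ 2 ≤ Fintype.card G * ∑ g, ‖v g‖ ^ 2 := by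
  have hbessel := (orthonormal_char V hirr hdistinct).sum_inner_products_le
    (s := univ) (WithLp.toLp 2 v)
  have hn : (0 : ℝ) < Fintype.card G := by exact_mod_cast Fintype.card_pos
  simp only [inner_smul_left, EuclideanSpace.inner_toLp_toLp, dotProduct, Pi.star_apply,
    norm_mul, norm_inv, map_inv₀, Complex.conj_ofReal, Complex.norm_real, Real.norm_eq_abs,
    abs_of_nonneg (Real.sqrt_nonneg _), mul_pow, inv_pow, Real.sq_sqrt hn.le,
    EuclideanSpace.norm_sq_eq, mul_comm (v _)] at hbessel
  rwa [← mul_sum, inv_mul_le_iff₀ hn] at hbessel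

theorem sum_norm_char_one_mul_norm_sum_char_le [Fintype ι] [Fintype (ConjClasses G)]
    (T : Set G) [DecidablePred (· ∈ T)] :
    ∑ i, ‖(V i).character 1‖ * ‖∑ g with g ∈ T, (V i).character g‖ ≤ Fintype.card G *
      √(∑ C : ConjClasses G, (Nat.card ↥(C.carrier ∩ T) : ℝ) ^ 2 / Nat.card C.carrier) := by
  set S := ∑ C : ConjClasses G, (Nat.card ↥(C.carrier ∩ T) : ℝ) ^ 2 / Nat.card C.carrier
  have hdim : ∑ i, ‖(V i).character 1‖ ^ 2 ≤ Fintype.card G := by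
    simpa [Pi.single_apply, apply_ite (‖·‖ ^ 2)] using
      sum_norm_sum_star_char_mul_sq_le V hirr hdistinct (Pi.single 1 1)
  have hT : ∑ i, ‖∑ g with g ∈ T, (V i).character g‖ ^ 2 ≤ Fintype.card G * S := by
    have hsum : ∀ i, ∑ g, star ((V i).character g) * (ConjClasses.density T (.mk g) : ℂ) =
        star (∑ g with g ∈ T, (V i).character g) := by
      intro i
      rw [star_sum, ← ConjClasses.sum_density_smul T _ fun g h hgh => by
        rw [char_eq_of_isConj _ hgh]]
      simp [Complex.real_smul, mul_comm]
    have h := sum_norm_sum_star_char_mul_sq_le V hirr hdistinct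
      fun g => (ConjClasses.density T (.mk g) : ℂ)
    simp only [hsum, norm_star, Complex.norm_real, Real.norm_eq_abs, sq_abs,
      ConjClasses.sum_density_sq] at h
    exact h
  calc ∑ i, ‖(V i).character 1‖ * ‖∑ g with g ∈ T, (V i).character g‖
      ≤ √(∑ i, ‖(V i).character 1‖ ^ 2) * √(∑ i, ‖∑ g with g ∈ T, (V i).character g‖ ^ 2) :=
        Real.sum_mul_le_sqrt_mul_sqrt _ _ _
    _ ≤ √(Fintype.card G) * √(Fintype.card G * S) := by gcongr
    _ = Fintype.card G * √S := by
        rw [Real.sqrt_mul (Nat.cast_nonneg _), ← mul_assoc,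
          Real.mul_self_sqrt (Nat.cast_nonneg _)]

end FDRep

theorem fourierSample_sub_fourierSample_bot {G ι : Type} [Group G] [Fintype G] [Fintype ι]
    (V : ι → FDRep ℂ G) (H : Subgroup G) (i : ι) :
    fourierSample V H i - fourierSample V ⊥ i =
      (V i).character 1 / Fintype.card G * ∑ g with g ∈ (H : Set G) \ {1}, (V i).character g := by
  simp only [fourierSample, Subgroup.sum_eq_add_sum_diff_one, Subgroup.coe_bot, sdiff_self,
    Set.bot_eq_empty, Set.mem_empty_iff_false, filter_false, sum_empty, add_zero]
  ring

theorem fourier_sample_tv_le_sqrt_general {G : Type} [Group G] [Fintype G]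
    [Fintype (ConjClasses G)] [DecidableEq (ConjClasses G)]
    {ι : Type} [Fintype ι]
    (V : ι → FDRep ℂ G)
    (hirr : ∀ i, CategoryTheory.Simple (V i))
    (hdistinct : ∀ i j : ι, Nonempty (V i ≅ V j) → i = j)
    (H : Subgroup G) :
    tvDist (fourierSample V H) (fourierSample V ⊥) ≤
      (1 / 2) * Real.sqrt (∑ C ∈ Finset.univ.filter
          (fun C : ConjClasses G => C ≠ ConjClasses.mk 1),
        (Nat.card (C.carrier ∩ (H : Set G) : Set G) : ℝ) ^ 2 / (Nat.card C.carrier : ℝ)) := by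
  have hn : (Fintype.card G : ℝ) ≠ 0 := by exact_mod_cast Fintype.card_ne_zero
  calc tvDist (fourierSample V H) (fourierSample V ⊥)
      = 1 / 2 * ((Fintype.card G : ℝ)⁻¹ * ∑ i, ‖(V i).character 1‖ *
          ‖∑ g with g ∈ (H : Set G) \ {1}, (V i).character g‖) := by
        rw [tvDist, mul_sum (a := (Fintype.card G : ℝ)⁻¹)]
        congr 1
        refine sum_congr rfl fun i _ => ?_
        rw [fourierSample_sub_fourierSample_bot, norm_mul, norm_div, Complex.norm_natCast]
        ring
    _ ≤ 1 / 2 * ((Fintype.card G : ℝ)⁻¹ * (Fintype.card G * √(∑ C : ConjClasses G,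
          (Nat.card ↥(C.carrier ∩ ((H : Set G) \ {1})) : ℝ) ^ 2 / Nat.card C.carrier))) := by
        gcongr
        exact FDRep.sum_norm_char_one_mul_norm_sum_char_le V hirr hdistinct _
    _ = _ := by rw [inv_mul_cancel_left₀ hn, ConjClasses.sum_natCard_inter_diff_one_sq_div]

/-- Proposition (sharpened Kempe–Shalev bound): with `P_H(ρ) = (d_ρ/|G|) Σ_(h∈H) χ^ρ(h)`
and `C_1, …, C_k` the non-identity conjugacy classes of `G`,
`‖P_H − P_(e)‖_TV ≤ (1/2) [Σ_i |C_i ∩ H|² |C_i|⁻¹]^(1/2)`,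
where `P_(e)` is the measure for the trivial subgroup (the Plancherel measure). -/
theorem fourier_sample_tv_le_sqrt {G : Type} [Group G] [Fintype G]
    [Fintype (ConjClasses G)] [DecidableEq (ConjClasses G)]
    {ι : Type} [Fintype ι] [DecidableEq ι]
    (V : ι → FDRep ℂ G)
    (hirr : ∀ i, CategoryTheory.Simple (V i))
    (hdistinct : ∀ i j : ι, Nonempty (V i ≅ V j) → i = j)
    (hcomplete : ∀ W : FDRep ℂ G, CategoryTheory.Simple W → ∃ i, Nonempty (W ≅ V i))
    (H : Subgroup G) :
    tvDist (fourierSample V H) (fourierSample V ⊥) ≤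
      (1 / 2) * Real.sqrt (∑ C ∈ Finset.univ.filter
          (fun C : ConjClasses G => C ≠ ConjClasses.mk 1),
        (Nat.card (C.carrier ∩ (H : Set G) : Set G) : ℝ) ^ 2 / (Nat.card C.carrier : ℝ)) :=
  fourier_sample_tv_le_sqrt_general V hirr hdistinct H
end
end
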